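/- arXiv:2103.15485 — 5 statements merged into one kernel-verified Lean document; each statement's English description precedes it below -/
import Mathlib

section
/- Let $z\in H^1(S^1,\mathbb{R})$, $z\neq 0$, be a critical point of the functional $\mathcal{Q}(z)=2\|z\|^2\|z'\|^2 + N/\|z\|^2$ (with $N>0$ fixed and $\|\cdot\|$ the $L^2$-norm). Then $z$ is smooth and satisfies the linear ODE $z'' = a z$ with constant $a = \|z'\|^2/\|z\|^2 - N/(2\|z\|^6)$; moreover $a<0$, so $z$ is a shifted sine function and all zeroes of $z$ are transverse. -/
open MeasureTheory Set

-- periodic + integrable on one period => interval integrable everywhere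
lemma per_intInt {f : ℝ → ℝ} (hf : Function.Periodic f 1)
    (h01 : IntervalIntegrable f volume 0 1) (a b : ℝ) :
    IntervalIntegrable f volume a b := by
  have hn : ∀ n : ℤ, IntervalIntegrable f volume n (n + 1) := by
    intro n
    have h := h01.comp_add_right (-(n : ℝ))
    have he : (fun x => f (x + -(n : ℝ))) = f := by
      funext x
      have := hf.sub_int_mul_eq (x := x) n
      simpa [sub_eq_add_neg] using this
    rw [he] at h
    simpa [add_comm] using h
  have hnat : ∀ n : ℕ, IntervalIntegrable f volume (-(n : ℝ)) n := by
    intro n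
    induction n with
    | zero => simpa using (IntervalIntegrable.refl (f := f) (μ := volume) (a := 0))
    | succ m ih =>
      have hr : IntervalIntegrable f volume (m : ℝ) ((m : ℝ) + 1) := by
        simpa [add_comm] using hn (m : ℤ)
      have hl : IntervalIntegrable f volume (-(m : ℝ) - 1) (-(m : ℝ)) := by
        have := hn (-(m : ℤ) - 1)
        push_cast at this
        simpa [sub_add_cancel] using this
      have : IntervalIntegrable f volume (-(m : ℝ) - 1) ((m : ℝ) + 1) :=
        (hl.trans ih).trans hr
      push_cast
      simpa [sub_eq_add_neg, neg_add, add_comm] using this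
  obtain ⟨n, hna, hnb⟩ : ∃ n : ℕ, |a| ≤ n ∧ |b| ≤ n := by
    obtain ⟨n, hn'⟩ := exists_nat_ge (max |a| |b|)
    exact ⟨n, (le_max_left _ _).trans hn', (le_max_right _ _).trans hn'⟩
  refine (hnat n).mono_set ?_
  have h1 : a ∈ Set.uIcc (-(n : ℝ)) n := by
    rw [Set.uIcc_of_le (by norm_num : -(n:ℝ) ≤ n)]
    constructor <;> [linarith [neg_abs_le a]; linarith [le_abs_self a]]
  have h2 : b ∈ Set.uIcc (-(n : ℝ)) n := by
    rw [Set.uIcc_of_le (by norm_num : -(n:ℝ) ≤ n)]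
    constructor <;> [linarith [neg_abs_le b]; linarith [le_abs_self b]]
  exact Set.uIcc_subset_uIcc h1 h2

lemma sq_int_pos {z : ℝ → ℝ} (hz : Continuous z) (hzper : Function.Periodic z 1)
    (hzne : ∃ τ, z τ ≠ 0) : 0 < ∫ σ in (0:ℝ)..1, z σ ^ 2 := by
  obtain ⟨τ, hτ⟩ := hzne
  have hsq : Continuous fun σ => z σ ^ 2 := hz.pow 2
  have hper2 : Function.Periodic (fun σ => z σ ^ 2) 1 := fun x => by simp [hzper x]
  -- shift the integration interval to be centered at τ
  have hshift : (∫ σ in (0:ℝ)..1, z σ ^ 2)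
      = ∫ σ in (τ - 2⁻¹)..(τ - 2⁻¹ + 1), z σ ^ 2 := by
    have := hper2.intervalIntegral_add_eq (τ - 2⁻¹) 0
    simpa using this.symm
  rw [hshift]
  -- small interval around τ where z ≠ 0
  obtain ⟨δ, hδpos, hδ⟩ : ∃ δ > 0, ∀ x, |x - τ| < δ → z x ≠ 0 := by
    have : {x : ℝ | z x ≠ 0} ∈ nhds τ :=
      (isOpen_compl_iff.2 (isClosed_singleton.preimage hz)).mem_nhds hτ
    obtain ⟨δ, hδpos, hδ⟩ := Metric.mem_nhds_iff.1 this
    exact ⟨δ, hδpos, fun x hx => hδ (by simpa [Real.dist_eq] using hx)⟩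
  set ε := min δ 2⁻¹ with hε
  have hεpos : 0 < ε := lt_min hδpos (by norm_num)
  have hεle : ε ≤ 2⁻¹ := min_le_right _ _
  have hii : ∀ a b : ℝ, IntervalIntegrable (fun σ => z σ ^ 2) volume a b :=
    fun a b => hsq.intervalIntegrable a b
  have hmid : 0 < ∫ σ in (τ - ε)..(τ + ε), z σ ^ 2 := by
    refine intervalIntegral.intervalIntegral_pos_of_pos_on (hii _ _) (fun x hx => ?_) (by linarith)
    have : z x ≠ 0 := hδ x (by
      rw [abs_lt]; constructor <;>
        [linarith [hx.1, min_le_left δ (2⁻¹:ℝ)]; linarith [hx.2, min_le_left δ (2⁻¹:ℝ)]])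
    positivity
  have h1 : (0:ℝ) ≤ ∫ σ in (τ - 2⁻¹)..(τ - ε), z σ ^ 2 :=
    intervalIntegral.integral_nonneg (by linarith) (fun u _ => by positivity)
  have h2 : (0:ℝ) ≤ ∫ σ in (τ + ε)..(τ - 2⁻¹ + 1), z σ ^ 2 :=
    intervalIntegral.integral_nonneg (by linarith) (fun u _ => by positivity)
  have hsplit : (∫ σ in (τ - 2⁻¹)..(τ - 2⁻¹ + 1), z σ ^ 2)
      = (∫ σ in (τ - 2⁻¹)..(τ - ε), z σ ^ 2) + (∫ σ in (τ - ε)..(τ + ε), z σ ^ 2)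
        + ∫ σ in (τ + ε)..(τ - 2⁻¹ + 1), z σ ^ 2 := by
    rw [intervalIntegral.integral_add_adjacent_intervals (hii _ _) (hii _ _),
      intervalIntegral.integral_add_adjacent_intervals (hii _ _) (hii _ _)]
  rw [hsplit]; linarith

lemma parts {c u : ℝ → ℝ} (hc : Continuous c)
    (hu : IntegrableOn u (Set.Ioc 0 1) volume) :
    ∫ t in (0:ℝ)..1, (∫ s in (0:ℝ)..t, c s) * u t
      = ∫ s in (0:ℝ)..1, c s * ∫ t in s..1, u t := by
  set μ := volume.restrict (Set.Ioc (0:ℝ) 1) with hμ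
  haveI : IsFiniteMeasure μ := by
    constructor
    rw [hμ, Measure.restrict_apply_univ, Real.volume_Ioc]
    norm_num
  obtain ⟨K, hK⟩ := (isCompact_Icc (a := (0:ℝ)) (b := 1)).exists_bound_of_continuousOn
    hc.continuousOn
  have hK0 : 0 ≤ K := le_trans (norm_nonneg (c 0)) (hK 0 (by norm_num))
  set F : ℝ → ℝ → ℝ := fun t s => if s ≤ t then c s * u t else 0 with hF
  have hFunc : Function.uncurry F
      = Set.indicator {p : ℝ × ℝ | p.2 ≤ p.1} (fun p => c p.2 * u p.1) := by
    funext p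
    by_cases h : p.2 ≤ p.1 <;>
      simp [hF, Function.uncurry, h, Set.indicator_of_mem, Set.indicator_of_notMem,
        Set.mem_setOf_eq]
  have hmeasS : MeasurableSet {p : ℝ × ℝ | p.2 ≤ p.1} :=
    measurableSet_le measurable_snd measurable_fst
  have huae : AEStronglyMeasurable u μ := hu.aestronglyMeasurable
  have hsm : AEStronglyMeasurable (Function.uncurry F) (μ.prod μ) := by
    rw [hFunc]
    exact (((hc.comp continuous_snd).aestronglyMeasurable).mul huae.comp_fst).indicator hmeasS
  have hprodres : μ.prod μ = (volume.prod volume).restrict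
      ((Set.Ioc (0:ℝ) 1) ×ˢ (Set.Ioc (0:ℝ) 1)) := Measure.prod_restrict _ _
  have hint : Integrable (Function.uncurry F) (μ.prod μ) := by
    refine Integrable.mono' ((hu.norm.mul_prod (integrable_const K)) :
      Integrable (fun p : ℝ × ℝ => ‖u p.1‖ * K) (μ.prod μ)) hsm ?_
    have hmem : ∀ᵐ p : ℝ × ℝ ∂(μ.prod μ),
        p ∈ (Set.Ioc (0:ℝ) 1) ×ˢ (Set.Ioc (0:ℝ) 1) := by
      rw [hprodres]
      exact ae_restrict_mem (measurableSet_Ioc.prod measurableSet_Ioc)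
    filter_upwards [hmem] with p hp
    rcases hp with ⟨hp1, hp2⟩
    by_cases h : p.2 ≤ p.1
    · have : ‖Function.uncurry F p‖ = ‖c p.2‖ * ‖u p.1‖ := by
        simp [hF, Function.uncurry, h, abs_mul]
      rw [this, mul_comm]
      exact mul_le_mul_of_nonneg_left (hK p.2 ⟨hp2.1.le, hp2.2⟩) (norm_nonneg _)
    · simp only [hF, Function.uncurry, h, if_false, norm_zero]
      positivity
  have hswap : (∫ t, ∫ s, F t s ∂μ ∂μ) = ∫ s, ∫ t, F t s ∂μ ∂μ :=
    integral_integral_swap hint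
  -- evaluate inner integrals on the left
  have hL : (∫ t, ∫ s, F t s ∂μ ∂μ) = ∫ t, (∫ s in (0:ℝ)..t, c s) * u t ∂μ := by
    refine integral_congr_ae ?_
    filter_upwards [ae_restrict_mem measurableSet_Ioc] with t ht
    have h1 : (fun s => F t s) = Set.indicator (Set.Iic t) (fun s => c s * u t) := by
      funext s
      by_cases h : s ≤ t <;> simp [hF, h, Set.indicator_of_mem, Set.indicator_of_notMem]
    rw [h1, integral_indicator measurableSet_Iic, hμ,
      Measure.restrict_restrict measurableSet_Iic]
    have h2 : Set.Iic t ∩ Set.Ioc (0:ℝ) 1 = Set.Ioc 0 t := by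
      ext x
      simp only [Set.mem_inter_iff, Set.mem_Iic, Set.mem_Ioc]
      exact ⟨fun ⟨hx, hx2, _⟩ => ⟨hx2, hx⟩, fun ⟨hx1, hx2⟩ => ⟨hx2, hx1, hx2.trans ht.2⟩⟩
    rw [h2, integral_mul_const, ← intervalIntegral.integral_of_le ht.1.le]
  have hR : (∫ s, ∫ t, F t s ∂μ ∂μ) = ∫ s, c s * (∫ t in s..1, u t) ∂μ := by
    refine integral_congr_ae ?_
    filter_upwards [ae_restrict_mem measurableSet_Ioc] with s hs
    have h1 : (fun t => F t s) = Set.indicator (Set.Ici s) (fun t => c s * u t) := by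
      funext t
      by_cases h : s ≤ t <;> simp [hF, h, Set.indicator_of_mem, Set.indicator_of_notMem]
    rw [h1, integral_indicator measurableSet_Ici, hμ,
      Measure.restrict_restrict measurableSet_Ici]
    have h2 : Set.Ici s ∩ Set.Ioc (0:ℝ) 1 = Set.Icc s 1 := by
      ext x
      simp only [Set.mem_inter_iff, Set.mem_Ici, Set.mem_Ioc, Set.mem_Icc]
      exact ⟨fun ⟨hx, _, hx2⟩ => ⟨hx, hx2⟩, fun ⟨hx1, hx2⟩ => ⟨hx1, hs.1.trans_le hx1, hx2⟩⟩
    rw [h2, integral_Icc_eq_integral_Ioc, integral_const_mul,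
      ← intervalIntegral.integral_of_le hs.2]
  rw [intervalIntegral.integral_of_le (by norm_num : (0:ℝ) ≤ 1),
    intervalIntegral.integral_of_le (by norm_num : (0:ℝ) ≤ 1)]
  rw [← hμ] at *
  rw [← hL, ← hR]
  exact hswap

lemma memL2_mul_int {α : Type*} [MeasurableSpace α] {μ : Measure α} {f g : α → ℝ}
    (hf : MemLp f 2 μ) (hg : MemLp g 2 μ) : Integrable (fun x => f x * g x) μ := by
  have h1 : Integrable (fun x => (f x + g x) ^ 2) μ := by
    simpa using (hf.add hg).integrable_sq
  have h := (h1.sub hf.integrable_sq).sub hg.integrable_sq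
  have he : (fun x => f x * g x)
      = fun x => ((f x + g x) ^ 2 - f x ^ 2 - g x ^ 2) * (1 / 2) := by
    funext x; ring
  rw [he]
  exact h.mul_const _

lemma cont_memL2 {f : ℝ → ℝ} (hf : Continuous f) :
    MemLp f 2 (volume.restrict (Set.Ioc (0:ℝ) 1)) := by
  haveI : IsFiniteMeasure (volume.restrict (Set.Ioc (0:ℝ) 1)) := by
    constructor
    rw [Measure.restrict_apply_univ, Real.volume_Ioc]
    norm_num
  obtain ⟨K, hK⟩ := (isCompact_Icc (a := (0:ℝ)) (b := 1)).exists_bound_of_continuousOn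
    hf.continuousOn
  refine MemLp.of_bound hf.aestronglyMeasurable K ?_
  filter_upwards [ae_restrict_mem measurableSet_Ioc] with x hx
  exact hK x ⟨hx.1.le, hx.2⟩

lemma primitive_periodic {f : ℝ → ℝ} (hii : ∀ a b : ℝ, IntervalIntegrable f volume a b)
    (hper : Function.Periodic f 1) (h0 : (∫ s in (0:ℝ)..1, f s) = 0) :
    Function.Periodic (fun t => ∫ s in (0:ℝ)..t, f s) 1 := by
  intro t
  have hadd := intervalIntegral.integral_add_adjacent_intervals (hii 0 t) (hii t (t + 1))
  have hper' := hper.intervalIntegral_add_eq t 0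
  simp only [zero_add] at hper'
  simp only [← hadd, hper', h0, add_zero]
set_option maxHeartbeats 1000000 in
/-- A nonzero critical point `z ∈ H¹(S¹,ℝ)` of `Q(z) = 2‖z‖²‖z'‖² + N/‖z‖²`
is smooth, satisfies `z'' = a z` with `a = ‖z'‖²/‖z‖² - N/(2‖z‖⁶) < 0`, is a
shifted sine function, and all its zeroes are transverse. -/
theorem stmt_5 (N : ℝ) (hN : 0 < N) (z z' : ℝ → ℝ)
    (hz : Continuous z) (hzper : Function.Periodic z 1)
    (hz' : MemLp z' 2 (volume.restrict (Set.Ioc (0:ℝ) 1)))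
    (hz'per : Function.Periodic z' 1)
    (hzFTC : ∀ t : ℝ, z t = z 0 + ∫ s in (0:ℝ)..t, z' s)
    (hzne : ∃ τ, z τ ≠ 0)
    (hcrit : ∀ v v' : ℝ → ℝ, Continuous v → Function.Periodic v 1 →
      MemLp v' 2 (volume.restrict (Set.Ioc (0:ℝ) 1)) →
      Function.Periodic v' 1 →
      (∀ t : ℝ, v t = v 0 + ∫ s in (0:ℝ)..t, v' s) →
      4 * (∫ σ in (0:ℝ)..1, z σ ^ 2) * (∫ σ in (0:ℝ)..1, z' σ * v' σ)
        + 4 * (∫ σ in (0:ℝ)..1, z' σ ^ 2) * (∫ σ in (0:ℝ)..1, z σ * v σ)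
        - 2 * N / (∫ σ in (0:ℝ)..1, z σ ^ 2) ^ 2
            * (∫ σ in (0:ℝ)..1, z σ * v σ) = 0) :
    let a := (∫ σ in (0:ℝ)..1, z' σ ^ 2) / (∫ σ in (0:ℝ)..1, z σ ^ 2)
      - N / (2 * (∫ σ in (0:ℝ)..1, z σ ^ 2) ^ 3)
    ContDiff ℝ (⊤ : ℕ∞) z ∧
    (∀ τ, deriv (deriv z) τ = a * z τ) ∧
    a < 0 ∧
    (∃ A φ : ℝ, ∀ τ, z τ = A * Real.sin (Real.sqrt (-a) * τ + φ)) ∧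
    (∀ τ, z τ = 0 → deriv z τ ≠ 0) := by
  intro a
  haveI hfin : IsFiniteMeasure (volume.restrict (Set.Ioc (0:ℝ) 1)) := by
    constructor
    rw [Measure.restrict_apply_univ, Real.volume_Ioc]
    norm_num
  have ha0 : a = (∫ σ in (0:ℝ)..1, z' σ ^ 2) / (∫ σ in (0:ℝ)..1, z σ ^ 2)
      - N / (2 * (∫ σ in (0:ℝ)..1, z σ ^ 2) ^ 3) := rfl
  clear_value a
  obtain ⟨Q, hQ⟩ : ∃ Q : ℝ, Q = ∫ σ in (0:ℝ)..1, z σ ^ 2 := ⟨_, rfl⟩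
  obtain ⟨P, hP⟩ : ∃ P : ℝ, P = ∫ σ in (0:ℝ)..1, z' σ ^ 2 := ⟨_, rfl⟩
  rw [← hQ, ← hP] at ha0
  have hQpos : 0 < Q := hQ ▸ sq_int_pos hz hzper hzne
  -- interval integrability of z'
  have hz'i : IntegrableOn z' (Set.Ioc 0 1) volume := hz'.integrable (by norm_num)
  have hz'01 : IntervalIntegrable z' volume 0 1 :=
    (intervalIntegrable_iff_integrableOn_Ioc_of_le (by norm_num)).2 hz'i
  have hz'ii : ∀ c d : ℝ, IntervalIntegrable z' volume c d := per_intInt hz'per hz'01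
  -- Step A : test with v = z gives P = N/(4 Q²)
  have hPval : P = N / (4 * Q ^ 2) := by
    have hA := hcrit z z' hz hzper hz' hz'per hzFTC
    have e1 : (∫ σ in (0:ℝ)..1, z' σ * z' σ) = P := by
      rw [hP]; exact intervalIntegral.integral_congr fun σ _ => by ring
    have e2 : (∫ σ in (0:ℝ)..1, z σ * z σ) = Q := by
      rw [hQ]; exact intervalIntegral.integral_congr fun σ _ => by ring
    rw [e1, e2, ← hQ, ← hP] at hA
    rw [eq_div_iff (by positivity)]
    field_simp at hA
    nlinarith [hA, hQpos]
  have ha : a = -(N / (4 * Q ^ 3)) := by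
    rw [ha0, hPval]
    field_simp
    ring
  have haneg : a < 0 := by
    rw [ha]
    have : 0 < N / (4 * Q ^ 3) := by positivity
    linarith
  -- Step B : test with v = 1 gives M = 0
  obtain ⟨M, hM⟩ : ∃ M : ℝ, M = ∫ σ in (0:ℝ)..1, z σ := ⟨_, rfl⟩
  have hM0 : M = 0 := by
    have hB := hcrit (fun _ => 1) (fun _ => 0) continuous_const (fun x => rfl)
      (memLp_const 0) (fun x => rfl) (fun t => by simp)
    simp only [mul_zero, mul_one, intervalIntegral.integral_zero, intervalIntegral.integral_const,
      smul_eq_mul] at hB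
    rw [← hQ, ← hP, ← hM] at hB
    have hco : 4 * P - 2 * N / Q ^ 2 = -(N / Q ^ 2) := by
      rw [hPval]; field_simp; ring
    have hNQ : 0 < N / Q ^ 2 := by positivity
    have h5 : (4 * P - 2 * N / Q ^ 2) * M = 0 := by linarith
    rw [hco] at h5
    rcases mul_eq_zero.1 h5 with h | h
    · exfalso; rw [neg_eq_zero] at h; linarith
    · exact h
  -- primitives
  obtain ⟨G, hGdef⟩ : ∃ G : ℝ → ℝ, G = fun t => ∫ s in (0:ℝ)..t, z s := ⟨_, rfl⟩
  have hGapp : ∀ t : ℝ, G t = ∫ s in (0:ℝ)..t, z s := fun t => by rw [hGdef]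
  have hGcont : Continuous G := by
    rw [hGdef]
    exact intervalIntegral.continuous_primitive (fun c d => hz.intervalIntegrable c d) 0
  have hGper : Function.Periodic G 1 := by
    rw [hGdef]
    exact primitive_periodic (fun c d => hz.intervalIntegrable c d) hzper (by rw [← hM]; exact hM0)
  obtain ⟨C, hCdef⟩ : ∃ C : ℝ, C = -(a * ∫ σ in (0:ℝ)..1, G σ) := ⟨_, rfl⟩
  obtain ⟨D, hDdef⟩ : ∃ D : ℝ → ℝ, D = fun t => a * G t + C := ⟨_, rfl⟩
  have hDcont : Continuous D := by
    rw [hDdef]; exact (continuous_const.mul hGcont).add continuous_const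
  have hDper : Function.Periodic D 1 := fun x => by simp [hDdef, hGper x]
  have hDint0 : (∫ s in (0:ℝ)..1, D s) = 0 := by
    simp only [hDdef]
    rw [intervalIntegral.integral_add (f := fun t => a * G t) ((continuous_const.mul hGcont).intervalIntegrable 0 1)
      intervalIntegrable_const]
    rw [intervalIntegral.integral_const_mul, intervalIntegral.integral_const]
    simp [hCdef]
  obtain ⟨u, hudef⟩ : ∃ u : ℝ → ℝ, u = fun t => z' t - D t := ⟨_, rfl⟩
  have huMem : MemLp u 2 (volume.restrict (Set.Ioc (0:ℝ) 1)) := by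
    rw [hudef]; exact hz'.sub (cont_memL2 hDcont)
  have huper : Function.Periodic u 1 := fun x => by simp [hudef, hz'per x, hDper x]
  have huii : ∀ c d : ℝ, IntervalIntegrable u volume c d := by
    intro c d
    rw [hudef]; exact (hz'ii c d).sub (hDcont.intervalIntegrable c d)
  have huint : IntegrableOn u (Set.Ioc 0 1) volume := huMem.integrable (by norm_num)
  have hz'sum : (∫ σ in (0:ℝ)..1, z' σ) = 0 := by
    have h1 := hzFTC 1
    have h0 : z 1 = z 0 := by simpa using hzper 0
    linarith
  have hu1 : (∫ σ in (0:ℝ)..1, u σ) = 0 := by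
    simp only [hudef]
    rw [intervalIntegral.integral_sub (hz'ii 0 1) (hDcont.intervalIntegrable 0 1),
      hz'sum, hDint0]
    ring
  obtain ⟨v, hvdef⟩ : ∃ v : ℝ → ℝ, v = fun t => ∫ s in (0:ℝ)..t, u s := ⟨_, rfl⟩
  have hvapp : ∀ t : ℝ, v t = ∫ s in (0:ℝ)..t, u s := fun t => by rw [hvdef]
  have hvcont : Continuous v := by
    rw [hvdef]; exact intervalIntegral.continuous_primitive huii 0
  have hvper : Function.Periodic v 1 := by
    rw [hvdef]; exact primitive_periodic huii huper hu1
  have hvFTC : ∀ t : ℝ, v t = v 0 + ∫ s in (0:ℝ)..t, u s := by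
    intro t; simp [hvapp]
  -- weak equation applied to v
  obtain ⟨X, hX⟩ : ∃ X : ℝ, X = ∫ σ in (0:ℝ)..1, z' σ * u σ := ⟨_, rfl⟩
  obtain ⟨Y, hY⟩ : ∃ Y : ℝ, Y = ∫ σ in (0:ℝ)..1, z σ * v σ := ⟨_, rfl⟩
  have hXY : X = -a * Y := by
    have hC2 := hcrit v u hvcont hvper huMem huper hvFTC
    rw [← hQ, ← hP, ← hX, ← hY] at hC2
    rw [ha]
    have hco : 4 * P - 2 * N / Q ^ 2 = -(N / Q ^ 2) := by
      rw [hPval]; field_simp; ring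
    have hQne : Q ≠ 0 := ne_of_gt hQpos
    have h4 : 4 * Q * X = (N / Q ^ 2) * Y := by linear_combination hC2 - Y * hco
    field_simp at h4 ⊢
    linear_combination h4
  -- integration by parts via Fubini
  have hGU : (∫ t in (0:ℝ)..1, G t * u t) = -Y := by
    have hparts := parts hz huint
    simp_rw [← hGapp] at hparts
    have hinner : ∀ s : ℝ, (∫ t in s..1, u t) = -(v s) := by
      intro s
      have h6 := intervalIntegral.integral_add_adjacent_intervals (huii 0 s) (huii s 1)
      rw [hu1] at h6
      rw [hvapp s]
      linarith [h6]
    calc (∫ t in (0:ℝ)..1, G t * u t)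
        = ∫ s in (0:ℝ)..1, z s * ∫ t in s..1, u t := hparts
      _ = ∫ s in (0:ℝ)..1, -(z s * v s) := by
          refine intervalIntegral.integral_congr fun s _ => ?_
          rw [hinner s]; ring
      _ = -Y := by rw [intervalIntegral.integral_neg, hY]
  -- conclude u = 0 a.e.
  have hGMem : MemLp G 2 (volume.restrict (Set.Ioc (0:ℝ) 1)) := cont_memL2 hGcont
  have hz'u_int : IntervalIntegrable (fun σ => z' σ * u σ) volume 0 1 :=
    (intervalIntegrable_iff_integrableOn_Ioc_of_le (by norm_num)).2 (memL2_mul_int hz' huMem)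
  have hGu_int : IntervalIntegrable (fun σ => G σ * u σ) volume 0 1 :=
    (intervalIntegrable_iff_integrableOn_Ioc_of_le (by norm_num)).2 (memL2_mul_int hGMem huMem)
  have huu : (∫ σ in (0:ℝ)..1, u σ * u σ) = 0 := by
    have hid : (fun σ => u σ * u σ)
        = fun σ => (z' σ * u σ - a * (G σ * u σ)) - C * u σ := by
      funext σ
      nth_rewrite 1 [hudef]
      simp only [hDdef]
      ring
    rw [hid]
    rw [intervalIntegral.integral_sub (hz'u_int.sub (hGu_int.const_mul a))
      ((huii 0 1).const_mul C)]
    rw [intervalIntegral.integral_sub hz'u_int (hGu_int.const_mul a)]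
    rw [intervalIntegral.integral_const_mul, intervalIntegral.integral_const_mul]
    rw [← hX, hGU, hu1, hXY]
    ring
  have huae : ∀ᵐ x ∂(volume.restrict (Set.Ioc (0:ℝ) 1)), u x = 0 := by
    have h2 : (∫ σ in Set.Ioc (0:ℝ) 1, u σ * u σ) = 0 := by
      rw [← intervalIntegral.integral_of_le (by norm_num : (0:ℝ) ≤ 1)]
      exact huu
    have hint2 : Integrable (fun σ => u σ * u σ) (volume.restrict (Set.Ioc (0:ℝ) 1)) :=
      memL2_mul_int huMem huMem
    have h3 := (integral_eq_zero_iff_of_nonneg (fun x => mul_self_nonneg (u x)) hint2).1 h2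
    filter_upwards [h3] with x hx
    exact mul_self_eq_zero.1 hx
  -- primitive of u vanishes on [0,1]
  have hveq : ∀ t ∈ Set.Icc (0:ℝ) 1, (∫ s in (0:ℝ)..t, u s) = 0 := by
    intro t ht
    rw [intervalIntegral.integral_of_le ht.1]
    have hsub : Set.Ioc (0:ℝ) t ⊆ Set.Ioc (0:ℝ) 1 := Set.Ioc_subset_Ioc_right ht.2
    have h7 : ∀ᵐ x ∂(volume.restrict (Set.Ioc (0:ℝ) t)), u x = 0 :=
      ae_restrict_of_ae_restrict_of_subset hsub huae
    rw [integral_congr_ae h7]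
    simp
  -- z equals its regularized version everywhere
  obtain ⟨H, hHdef⟩ : ∃ H : ℝ → ℝ, H = fun t => ∫ s in (0:ℝ)..t, D s := ⟨_, rfl⟩
  have hHper : Function.Periodic H 1 := by
    rw [hHdef]
    exact primitive_periodic (fun c d => hDcont.intervalIntegrable c d) hDper hDint0
  have hzH1 : ∀ t ∈ Set.Icc (0:ℝ) 1, z t = z 0 + H t := by
    intro t ht
    have h1 := hzFTC t
    have h2 : (∫ s in (0:ℝ)..t, z' s) - H t = ∫ s in (0:ℝ)..t, u s := by
      simp only [hHdef, hudef]
      rw [← intervalIntegral.integral_sub (hz'ii 0 t) (hDcont.intervalIntegrable 0 t)]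
    rw [hveq t ht] at h2
    have h8 : (∫ s in (0:ℝ)..t, z' s) = H t := by linarith
    rw [h1, h8]
  have hzH : ∀ t : ℝ, z t = z 0 + H t := by
    have hpper : Function.Periodic (fun t => z t - (z 0 + H t)) 1 := fun x => by
      simp [hzper x, hHper x]
    intro t
    obtain ⟨y, hy, hpy⟩ := hpper.exists_mem_Ico₀ one_pos t
    have hy0 : z y - (z 0 + H y) = 0 := by
      have := hzH1 y ⟨hy.1, hy.2.le⟩
      linarith
    rw [hy0] at hpy
    linarith [hpy]
  -- derivatives
  have hHd : ∀ t : ℝ, HasDerivAt H (D t) t := by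
    intro t
    rw [hHdef]
    exact intervalIntegral.integral_hasDerivAt_right (hDcont.intervalIntegrable 0 t)
      (hDcont.stronglyMeasurableAtFilter volume (nhds t)) hDcont.continuousAt
  have hzd : ∀ t : ℝ, HasDerivAt z (D t) t := by
    intro t
    rw [show z = fun t => z 0 + H t from funext hzH]
    simpa using (hHd t).const_add (z 0)
  have hderivz : deriv z = D := funext fun t => (hzd t).deriv
  have hGd : ∀ t : ℝ, HasDerivAt G (z t) t := by
    intro t
    rw [hGdef]
    exact intervalIntegral.integral_hasDerivAt_right (hz.intervalIntegrable 0 t)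
      (hz.stronglyMeasurableAtFilter volume (nhds t)) hz.continuousAt
  have hDd : ∀ t : ℝ, HasDerivAt D (a * z t) t := by
    intro t
    have h9 := ((hGd t).const_mul a).add_const C
    rw [hDdef]
    simpa using h9
  have hgoal2 : ∀ τ : ℝ, deriv (deriv z) τ = a * z τ := by
    intro τ
    rw [hderivz]
    exact (hDd τ).deriv
  -- explicit sinusoidal solution
  obtain ⟨ω, hωdef⟩ : ∃ ω : ℝ, ω = Real.sqrt (-a) := ⟨_, rfl⟩
  have hωpos : 0 < ω := hωdef ▸ Real.sqrt_pos.2 (by linarith)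
  have hω2 : ω ^ 2 = -a := hωdef ▸ Real.sq_sqrt (by linarith)
  obtain ⟨B, hBdef⟩ : ∃ B : ℝ, B = z 0 := ⟨_, rfl⟩
  obtain ⟨Dc, hDcdef⟩ : ∃ Dc : ℝ, Dc = C / ω := ⟨_, rfl⟩
  have hDcω : Dc * ω = C := by
    rw [hDcdef]; field_simp
  obtain ⟨w, hwdef⟩ : ∃ w : ℝ → ℝ,
    w = fun t => B * Real.cos (ω * t) + Dc * Real.sin (ω * t) := ⟨_, rfl⟩
  obtain ⟨wd, hwddef⟩ : ∃ wd : ℝ → ℝ,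
    wd = fun t => -(B * ω) * Real.sin (ω * t) + C * Real.cos (ω * t) := ⟨_, rfl⟩
  have hlin : ∀ t : ℝ, HasDerivAt (fun x : ℝ => ω * x) ω t := fun t => by
    simpa using (hasDerivAt_id t).const_mul ω
  have hwd : ∀ t : ℝ, HasDerivAt w (wd t) t := by
    intro t
    have hcos : HasDerivAt (fun x : ℝ => Real.cos (ω * x)) (-Real.sin (ω * t) * ω) t :=
      (Real.hasDerivAt_cos (ω * t)).comp t (hlin t)
    have hsin : HasDerivAt (fun x : ℝ => Real.sin (ω * x)) (Real.cos (ω * t) * ω) t :=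
      (Real.hasDerivAt_sin (ω * t)).comp t (hlin t)
    have h := (hcos.const_mul B).add (hsin.const_mul Dc)
    have he : B * (-Real.sin (ω * t) * ω) + Dc * (Real.cos (ω * t) * ω) = wd t := by
      simp only [hwddef]
      rw [← hDcω]
      ring
    rw [he] at h
    rw [hwdef]
    exact h
  have hwdd : ∀ t : ℝ, HasDerivAt wd (a * w t) t := by
    intro t
    have hcos : HasDerivAt (fun x : ℝ => Real.cos (ω * x)) (-Real.sin (ω * t) * ω) t :=
      (Real.hasDerivAt_cos (ω * t)).comp t (hlin t)
    have hsin : HasDerivAt (fun x : ℝ => Real.sin (ω * x)) (Real.cos (ω * t) * ω) t :=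
      (Real.hasDerivAt_sin (ω * t)).comp t (hlin t)
    have h := (hsin.const_mul (-(B * ω))).add (hcos.const_mul C)
    have he : -(B * ω) * (Real.cos (ω * t) * ω) + C * (-Real.sin (ω * t) * ω) = a * w t := by
      simp only [hwdef]
      rw [← hDcω, show a = -(ω ^ 2) by rw [hω2]; ring]
      ring
    rw [he] at h
    rw [hwddef]
    exact h
  -- energy argument: z = w
  obtain ⟨e, hedef⟩ : ∃ e : ℝ → ℝ, e = fun t => z t - w t := ⟨_, rfl⟩
  obtain ⟨ed, heddef⟩ : ∃ ed : ℝ → ℝ, ed = fun t => D t - wd t := ⟨_, rfl⟩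
  have hed : ∀ t : ℝ, HasDerivAt e (ed t) t := by
    intro t
    rw [hedef, heddef]
    exact (hzd t).sub (hwd t)
  have hedd : ∀ t : ℝ, HasDerivAt ed (a * e t) t := by
    intro t
    have h10 := (hDd t).sub (hwdd t)
    have he : a * z t - a * w t = a * e t := by rw [hedef]; ring
    rw [he] at h10
    rw [heddef]
    exact h10
  have hEd : ∀ t : ℝ, HasDerivAt (fun x => ed x ^ 2 - a * e x ^ 2) 0 t := by
    intro t
    have h1 : HasDerivAt (fun x => ed x ^ 2) (2 * ed t ^ 1 * (a * e t)) t := (hedd t).pow 2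
    have h2 : HasDerivAt (fun x => e x ^ 2) (2 * e t ^ 1 * ed t) t := (hed t).pow 2
    have h := h1.sub (h2.const_mul a)
    have he : 2 * ed t ^ 1 * (a * e t) - a * (2 * e t ^ 1 * ed t) = 0 := by ring
    rw [he] at h
    exact h
  have hEzero : ∀ t : ℝ, ed t ^ 2 - a * e t ^ 2 = 0 := by
    have hEconst : ∀ s : ℝ, ed s ^ 2 - a * e s ^ 2 = ed 0 ^ 2 - a * e 0 ^ 2 := by
      intro s
      exact is_const_of_deriv_eq_zero (fun x => (hEd x).differentiableAt)
        (fun x => (hEd x).deriv) s 0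
    have hG0 : G 0 = 0 := by rw [hGapp 0]; exact intervalIntegral.integral_same
    have he0 : e 0 = 0 := by simp [hedef, hwdef, hBdef]
    have hed0 : ed 0 = 0 := by
      simp [heddef, hDdef, hwddef, hG0]
    intro t
    rw [hEconst t, he0, hed0]
    ring
  have hzw : ∀ t : ℝ, z t = w t := by
    intro t
    have h := hEzero t
    have he2 : e t ^ 2 = 0 := by nlinarith [sq_nonneg (ed t), sq_nonneg (e t), haneg]
    have h11 : e t = 0 := pow_eq_zero_iff (n := 2) (by norm_num) |>.1 he2
    have := hedef ▸ h11
    simpa [hedef, sub_eq_zero] using h11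
  have hedz : ∀ t : ℝ, ed t = 0 := by
    intro t
    have h := hEzero t
    have he2 : e t ^ 2 = 0 := by nlinarith [sq_nonneg (ed t), sq_nonneg (e t), haneg]
    have hed2 : ed t ^ 2 = 0 := by nlinarith
    exact pow_eq_zero_iff (n := 2) (by norm_num) |>.1 hed2
  have hderivzw : ∀ t : ℝ, deriv z t = wd t := by
    intro t
    rw [hderivz]
    have h12 := hedz t
    simp only [heddef] at h12
    linarith
  -- amplitude-phase form
  have hBDne : ¬(B = 0 ∧ Dc = 0) := by
    rintro ⟨hB, hDc⟩
    obtain ⟨τ₀, hτ₀⟩ := hzne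
    apply hτ₀
    rw [hzw τ₀]
    simp [hwdef, hB, hDc]
  have hBD : 0 < B ^ 2 + Dc ^ 2 := by
    rcases not_and_or.1 hBDne with h | h
    · have : 0 < B ^ 2 := by positivity
      nlinarith [sq_nonneg Dc]
    · have : 0 < Dc ^ 2 := by positivity
      nlinarith [sq_nonneg B]
  obtain ⟨A, hAdef⟩ : ∃ A : ℝ, A = Real.sqrt (B ^ 2 + Dc ^ 2) := ⟨_, rfl⟩
  have hApos : 0 < A := hAdef ▸ Real.sqrt_pos.2 hBD
  obtain ⟨ζ, hζdef⟩ : ∃ ζ : ℂ, ζ = (Dc : ℂ) + (B : ℂ) * Complex.I := ⟨_, rfl⟩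
  have habs : ‖ζ‖ = A := by
    rw [hζdef, Complex.norm_add_mul_I, hAdef, add_comm]
  have hζne : ζ ≠ 0 := by
    intro h
    rw [h] at habs
    simp only [norm_zero] at habs
    linarith
  obtain ⟨φ, hφdef⟩ : ∃ φ : ℝ, φ = Complex.arg ζ := ⟨_, rfl⟩
  have hcosφ : Real.cos φ = Dc / A := by
    rw [hφdef, Complex.cos_arg hζne, habs, hζdef]
    simp
  have hsinφ : Real.sin φ = B / A := by
    rw [hφdef, Complex.sin_arg, habs, hζdef]
    simp
  have hform : ∀ τ : ℝ, z τ = A * Real.sin (ω * τ + φ) := by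
    intro τ
    rw [hzw τ, Real.sin_add, hcosφ, hsinφ]
    simp only [hwdef]
    field_simp
    ring
  -- smoothness
  have hsmooth : ContDiff ℝ (⊤ : ℕ∞) z := by
    rw [show z = w from funext hzw, hwdef]
    apply ContDiff.add
    · exact contDiff_const.mul (Real.contDiff_cos.comp (contDiff_const.mul contDiff_id))
    · exact contDiff_const.mul (Real.contDiff_sin.comp (contDiff_const.mul contDiff_id))
  -- transversality
  have htrans : ∀ τ : ℝ, z τ = 0 → deriv z τ ≠ 0 := by
    intro τ hzτ
    have hsin0 : Real.sin (ω * τ + φ) = 0 := by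
      have h13 := hform τ
      rw [hzτ] at h13
      rcases mul_eq_zero.1 h13.symm with h | h
      · exact absurd h (ne_of_gt hApos)
      · exact h
    have hcos1 : Real.cos (ω * τ + φ) ^ 2 = 1 := by
      have h14 := Real.sin_sq_add_cos_sq (ω * τ + φ)
      rw [hsin0] at h14
      nlinarith
    have hcosne : Real.cos (ω * τ + φ) ≠ 0 := by
      intro h
      rw [h] at hcos1
      norm_num at hcos1
    have hwdform : wd τ = ω * A * Real.cos (ω * τ + φ) := by
      rw [Real.cos_add, hcosφ, hsinφ]
      simp only [hwddef]
      rw [← hDcω]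
      field_simp
      ring
    rw [hderivzw τ, hwdform]
    exact mul_ne_zero (mul_ne_zero (ne_of_gt hωpos) (ne_of_gt hApos)) hcosne
  exact ⟨hsmooth, hgoal2, haneg, ⟨A, φ, fun τ => by rw [hform τ, hωdef]⟩, htrans⟩
end

section
/- Let $q:[0,1]\to(0,\infty)$ be a smooth 1-periodic function satisfying $\ddot q(t) = -2/q(t)^2 + f$ for a constant $f>0$. Then $q$ is constant, $q\equiv \bar q$, where $\bar q>0$ satisfies $\bar q^2 f = 2$. -/
open scoped ContDiff

/-- At a global maximum of a smooth function, the second derivative is ≤ 0. -/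
lemma second_deriv_nonpos_at_max (q : ℝ → ℝ) (hsmooth : ContDiff ℝ (⊤ : ℕ∞) q)
    (t₀ : ℝ) (hmax : ∀ t, q t ≤ q t₀) : deriv (deriv q) t₀ ≤ 0 := by
  have hsm : ContDiff ℝ (∞ : WithTop ℕ∞) q := hsmooth.of_le (by simp)
  have hq' : ContDiff ℝ (∞ : WithTop ℕ∞) (deriv q) := (contDiff_infty_iff_deriv.mp hsm).2
  have hdq : Differentiable ℝ q := (contDiff_infty_iff_deriv.mp hsm).1
  have hdq' : Differentiable ℝ (deriv q) := (contDiff_infty_iff_deriv.mp hq').1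
  have hq'' : Continuous (deriv (deriv q)) :=
    (contDiff_infty_iff_deriv.mp hq').2.continuous
  -- first derivative vanishes at a max
  have hloc : IsLocalMax q t₀ := isMaxOn_univ_iff.mpr (fun t => hmax t) |>.isLocalMax
    (by simp)
  have h1 : deriv q t₀ = 0 := hloc.deriv_eq_zero
  by_contra h
  push_neg at h
  -- a neighborhood where deriv (deriv q) > 0
  obtain ⟨ε, hε, hball⟩ := Metric.isOpen_iff.mp
    (isOpen_lt continuous_const hq'') t₀ h
  have hsub : Set.Icc t₀ (t₀ + ε / 2) ⊆ Metric.ball t₀ ε := by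
    intro x hx
    obtain ⟨hx1, hx2⟩ := hx
    rw [Metric.mem_ball, Real.dist_eq, abs_lt]
    constructor <;> linarith
  -- deriv q strictly mono on [t₀, a]
  have hmono : StrictMonoOn (deriv q) (Set.Icc t₀ (t₀ + ε / 2)) := by
    apply strictMonoOn_of_deriv_pos (convex_Icc _ _) (hdq'.continuous.continuousOn)
    intro x hx
    rw [interior_Icc] at hx
    exact hball (hsub ⟨le_of_lt hx.1, le_of_lt hx.2⟩)
  -- so deriv q > 0 on (t₀, a]
  have hq'pos : ∀ x ∈ Set.Ioo t₀ (t₀ + ε / 2), 0 < deriv q x := by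
    intro x hx
    have := hmono ⟨le_refl _, by linarith [hx.2]⟩ ⟨le_of_lt hx.1, le_of_lt hx.2⟩ hx.1
    rwa [h1] at this
  -- so q strictly mono on [t₀, a]
  have hqmono : StrictMonoOn q (Set.Icc t₀ (t₀ + ε / 2)) := by
    apply strictMonoOn_of_deriv_pos (convex_Icc _ _) (hdq.continuous.continuousOn)
    intro x hx
    rw [interior_Icc] at hx
    exact hq'pos x hx
  have : q t₀ < q (t₀ + ε / 2) := hqmono ⟨le_refl _, by linarith⟩
    ⟨by linarith, le_refl _⟩ (by linarith)
  exact absurd (hmax (t₀ + ε / 2)) (not_le.mpr this)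

/-- A smooth positive 1-periodic solution of `q̈ = -2/q² + f` with constant
`f > 0` is constant, equal to `q̄` with `q̄² f = 2`. -/
theorem stmt_6 (q : ℝ → ℝ) (f : ℝ) (hf : 0 < f)
    (hsmooth : ContDiff ℝ (⊤ : ℕ∞) q) (hper : Function.Periodic q 1)
    (hpos : ∀ t, 0 < q t)
    (hODE : ∀ t, deriv (deriv q) t = -2 / (q t) ^ 2 + f) :
    ∃ qb : ℝ, 0 < qb ∧ (∀ t, q t = qb) ∧ qb ^ 2 * f = 2 := by
  have hcont : Continuous q := hsmooth.continuous
  -- max and min on [0,1]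
  obtain ⟨t₀, ht₀mem, ht₀⟩ := isCompact_Icc.exists_isMaxOn (Set.nonempty_Icc.mpr zero_le_one)
    hcont.continuousOn
  obtain ⟨t₁, ht₁mem, ht₁⟩ := isCompact_Icc.exists_isMinOn (Set.nonempty_Icc.mpr zero_le_one)
    hcont.continuousOn
  -- extend to global via periodicity
  have key : ∀ t : ℝ, ∃ s ∈ Set.Icc (0:ℝ) 1, q t = q s := by
    intro t
    refine ⟨t - ⌊t⌋, ⟨by linarith [Int.floor_le t], by linarith [Int.lt_floor_add_one t]⟩, ?_⟩
    have := hper.sub_int_mul_eq (x := t) ⌊t⌋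
    rw [mul_one] at this
    exact this.symm
  have hmax : ∀ t, q t ≤ q t₀ := by
    intro t; obtain ⟨s, hs, hqs⟩ := key t; rw [hqs]; exact ht₀ hs
  have hmin : ∀ t, q t₁ ≤ q t := by
    intro t; obtain ⟨s, hs, hqs⟩ := key t; rw [hqs]; exact ht₁ hs
  -- second derivative signs
  have h2max : deriv (deriv q) t₀ ≤ 0 := second_deriv_nonpos_at_max q hsmooth t₀ hmax
  have h2min : 0 ≤ deriv (deriv q) t₁ := by
    have hneg : ContDiff ℝ (⊤ : ℕ∞) (-q) := hsmooth.neg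
    have := second_deriv_nonpos_at_max (-q) hneg t₁ (fun t => by
      simp only [Pi.neg_apply, neg_le_neg_iff]; exact hmin t)
    have hd1 : deriv (-q) = -(deriv q) := by
      funext x
      exact deriv.neg (f := q)
    rw [hd1] at this
    have hd2 : deriv (-(deriv q)) t₁ = -(deriv (deriv q) t₁) :=
      deriv.neg (f := deriv q)
    rw [hd2] at this
    linarith
  rw [hODE t₀] at h2max
  rw [hODE t₁] at h2min
  have hp0 := hpos t₀
  have hp1 := hpos t₁
  -- f ≤ 2 / q t₀ ^ 2 and 2 / q t₁ ^ 2 ≤ f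
  have hA : f * q t₀ ^ 2 ≤ 2 := by
    have h := h2max
    have hne : (q t₀) ^ 2 > 0 := by positivity
    rw [div_add' _ _ _ (ne_of_gt hne)] at h
    have := (div_nonpos_iff.mp h)
    rcases this with ⟨h1, h2⟩ | ⟨h1, h2⟩
    · linarith
    · nlinarith
  have hB : 2 ≤ f * q t₁ ^ 2 := by
    have h := h2min
    have hne : (q t₁) ^ 2 > 0 := by positivity
    rw [div_add' _ _ _ (ne_of_gt hne)] at h
    rcases (div_nonneg_iff.mp h) with ⟨h1, h2⟩ | ⟨h1, h2⟩
    · linarith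
    · nlinarith
  -- hence q t₁ ≥ q t₀, but also q t₁ ≤ q t₀, so equal
  have hsq : q t₀ ^ 2 ≤ q t₁ ^ 2 := by nlinarith
  have hle : q t₀ ≤ q t₁ := by nlinarith
  have heq : q t₀ = q t₁ := le_antisymm hle (hmin t₀)
  refine ⟨q t₀, hp0, fun t => le_antisymm (hmax t) (heq ▸ hmin t), ?_⟩
  have hB' : 2 ≤ f * q t₀ ^ 2 := by rw [heq]; exact hB
  rw [mul_comm]
  exact le_antisymm hA hB'
end

section
/- Let $q:[0,1]\to[0,\infty)$ be continuous, smooth and positive on $[0,1)$, with $\dot q(0)=0$, $q(1)=0$, satisfying $\ddot q(t) = -2/q(t)^2 - f$ on $[0,1)$ for a constant $f\geq 0$. Then $q$ is strictly concave and strictly decreasing on $(0,1)$, its maximum $q^{\max}=q(0)$ satisfies $1\leq q^{\max}\leq 2+f/2$, and its mean $\bar q = \int_0^1 q(t)dt$ satisfies $q^{\max}/2 \leq \bar q \leq q^{\max}$. -/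
/-!
Since `q̈ = -2/q² - f < 0` and `q̇(0) = 0`, `q̇ < 0` on `(0,1)`, so `q` is strictly concave
and decreasing. As `q ≤ q(0)`, also `q̈ ≤ -2/q(0)²`, and integrating twice gives
`0 = q(1) ≤ q(0) - 1/q(0)²`, i.e. `q(0) ≥ 1`.

For the upper bound, `q̈ = -2/q² - f` is decreasing together with `q`, so the mean value
theorem gives `t q̈(t) ≤ q̇(t)`, which integrates to `t q̇(t) ≤ 2 (q(t) - q(0))`. At the point
`s` where `q(s) = 1` this gives `4 (q(0) - 1)² ≤ q̇(s)²`, while conservation of the energy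
`q̇² - 4/q + 2fq` gives `q̇(s)² = (q(0) - 1) (4/q(0) + 2f)`; hence `q(0) - 1 ≤ 1/q(0) + f/2`.

The mean of `q` lies between the mean `q(0)/2` of the chord `(1 - t) q(0)` and `q(0)`.
-/

open Set

theorem antitoneOn_Ico_of_hasDerivAt_nonpos {F F' : ℝ → ℝ} {a b : ℝ}
    (hF : ∀ x ∈ Ico a b, HasDerivAt F (F' x) x) (hF' : ∀ x ∈ Ioo a b, F' x ≤ 0) :
    AntitoneOn F (Ico a b) :=
  antitoneOn_of_hasDerivWithinAt_nonpos (convex_Ico a b)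
    (fun x hx ↦ (hF x hx).continuousAt.continuousWithinAt)
    (by simpa only [interior_Ico] using
      fun x hx ↦ (hF x (Ioo_subset_Ico_self hx)).hasDerivWithinAt)
    (by simpa only [interior_Ico] using hF')

theorem strictAntiOn_Ico_of_hasDerivAt_neg {F F' : ℝ → ℝ} {a b : ℝ}
    (hF : ∀ x ∈ Ico a b, HasDerivAt F (F' x) x) (hF' : ∀ x ∈ Ioo a b, F' x < 0) :
    StrictAntiOn F (Ico a b) :=
  strictAntiOn_of_hasDerivWithinAt_neg (convex_Ico a b)
    (fun x hx ↦ (hF x hx).continuousAt.continuousWithinAt)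
    (by simpa only [interior_Ico] using
      fun x hx ↦ (hF x (Ioo_subset_Ico_self hx)).hasDerivWithinAt)
    (by simpa only [interior_Ico] using hF')

theorem strictAntiOn_Icc_of_hasDerivAt_neg {F F' : ℝ → ℝ} {a b : ℝ}
    (hcont : ContinuousOn F (Icc a b)) (hF : ∀ x ∈ Ioo a b, HasDerivAt F (F' x) x)
    (hF' : ∀ x ∈ Ioo a b, F' x < 0) : StrictAntiOn F (Icc a b) :=
  strictAntiOn_of_hasDerivWithinAt_neg (convex_Icc a b) hcont
    (by simpa only [interior_Icc] using fun x hx ↦ (hF x hx).hasDerivWithinAt)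
    (by simpa only [interior_Icc] using hF')

theorem strictConcaveOn_Icc_of_hasDerivAt {q q' : ℝ → ℝ} {a b : ℝ}
    (hcont : ContinuousOn q (Icc a b)) (hq' : ∀ t ∈ Ioo a b, HasDerivAt q (q' t) t)
    (hanti : StrictAntiOn q' (Ioo a b)) : StrictConcaveOn ℝ (Icc a b) q :=
  StrictAntiOn.strictConcaveOn_of_deriv (convex_Icc a b) hcont <| by
    rw [interior_Icc]
    exact hanti.congr fun t ht ↦ (hq' t ht).deriv.symm

theorem image_le_of_deriv2_le {q q' q'' : ℝ → ℝ} {a b c : ℝ} (hab : a ≤ b)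
    (hcont : ContinuousOn q (Icc a b)) (hq' : ∀ t ∈ Ico a b, HasDerivAt q (q' t) t)
    (hq'' : ∀ t ∈ Ico a b, HasDerivAt q' (q'' t) t) (hq'a : q' a = 0)
    (hc : ∀ t ∈ Ioo a b, q'' t ≤ -c) :
    q b ≤ q a - c * (b - a) ^ 2 / 2 := by
  have hslope : ∀ t ∈ Ico a b, q' t + c * (t - a) ≤ 0 := by
    have hanti : AntitoneOn (fun t ↦ q' t + c * (t - a)) (Ico a b) :=
      antitoneOn_Ico_of_hasDerivAt_nonpos
        (fun t ht ↦ (hq'' t ht).add (((hasDerivAt_id t).sub_const a).const_mul c))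
        (fun t ht ↦ by simpa using add_le_add_left (hc t ht) c)
    intro t ht
    simpa [hq'a] using hanti (left_mem_Ico.2 (ht.1.trans_lt ht.2)) ht ht.1
  have hanti : AntitoneOn (fun t ↦ q t + c * (t - a) ^ 2 / 2) (Icc a b) := by
    refine antitoneOn_of_hasDerivWithinAt_nonpos (convex_Icc a b)
      (hcont.add (by fun_prop)) (f' := fun t ↦ q' t + c * (t - a)) ?_ ?_ <;> rw [interior_Icc]
    · intro t ht
      refine HasDerivAt.hasDerivWithinAt ?_
      refine ((hq' t (Ioo_subset_Ico_self ht)).add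
        ((((hasDerivAt_id' t).sub_const a).pow 2).const_mul c |>.div_const 2)).congr_deriv ?_
      ring
    · exact fun t ht ↦ hslope t (Ioo_subset_Ico_self ht)
  have := hanti (left_mem_Icc.2 hab) (right_mem_Icc.2 hab) hab
  simp only [sub_self] at this
  linarith

theorem one_le_of_deriv2_le_neg_two_div_sq {q q' q'' : ℝ → ℝ}
    (hcont : ContinuousOn q (Icc 0 1)) (hq' : ∀ t ∈ Ico 0 1, HasDerivAt q (q' t) t)
    (hq'' : ∀ t ∈ Ico 0 1, HasDerivAt q' (q'' t) t) (hq'0 : q' 0 = 0) (hq1 : q 1 = 0)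
    (hq0 : 0 < q 0) (hle : ∀ t ∈ Ioo 0 1, q'' t ≤ -(2 / q 0 ^ 2)) : 1 ≤ q 0 := by
  have h := image_le_of_deriv2_le zero_le_one hcont hq' hq'' hq'0 hle
  rw [hq1, sub_nonneg, show 2 / q 0 ^ 2 * (1 - 0) ^ 2 / 2 = 1 / q 0 ^ 2 by ring,
    div_le_iff₀ (by positivity), ← pow_succ'] at h
  exact (one_le_pow_iff_of_nonneg hq0.le three_ne_zero).1 h

theorem mul_le_sub_of_antitoneOn_deriv {g g' : ℝ → ℝ} {a b : ℝ}
    (hg : ∀ t ∈ Ico a b, HasDerivAt g (g' t) t) (hanti : AntitoneOn g' (Ico a b)) :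
    ∀ t ∈ Ico a b, (t - a) * g' t ≤ g t - g a := by
  intro t ht
  rcases ht.1.eq_or_lt with rfl | hat
  · simp
  have hsub : Icc a t ⊆ Ico a b := Icc_subset_Ico_right ht.2
  obtain ⟨ξ, hξ, hslope⟩ := exists_hasDerivAt_eq_slope g g' hat
    (fun x hx ↦ (hg x (hsub hx)).continuousAt.continuousWithinAt)
    (fun x hx ↦ hg x (hsub (Ioo_subset_Icc_self hx)))
  have hle : g' t ≤ g' ξ := hanti (hsub (Ioo_subset_Icc_self hξ)) ht hξ.2.le
  rw [hslope, le_div_iff₀ (sub_pos.2 hat)] at hle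
  linarith

theorem mul_deriv_le_two_mul_sub {q q' q'' : ℝ → ℝ} {a b : ℝ}
    (hq' : ∀ t ∈ Ico a b, HasDerivAt q (q' t) t) (hq'' : ∀ t ∈ Ico a b, HasDerivAt q' (q'' t) t)
    (hq'a : q' a = 0) (hanti : AntitoneOn q'' (Ico a b)) :
    ∀ t ∈ Ico a b, (t - a) * q' t ≤ 2 * (q t - q a) := by
  have hG : AntitoneOn (fun t ↦ (t - a) * q' t - 2 * (q t - q a)) (Ico a b) :=
    antitoneOn_Ico_of_hasDerivAt_nonpos (F' := fun t ↦ (t - a) * q'' t - q' t)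
      (fun t ht ↦ ((((hasDerivAt_id' t).sub_const a).mul (hq'' t ht)).sub
        (((hq' t ht).sub_const (q a)).const_mul 2)).congr_deriv (by ring))
      (fun t ht ↦ by
        have := mul_le_sub_of_antitoneOn_deriv hq'' hanti t (Ioo_subset_Ico_self ht)
        rw [hq'a] at this
        linarith)
  intro t ht
  have := hG (left_mem_Ico.2 (ht.1.trans_lt ht.2)) ht ht.1
  simp only [sub_self, zero_mul] at this
  linarith

theorem antitoneOn_of_eq_neg_two_div_sq_sub {q q'' : ℝ → ℝ} {f : ℝ} {s : Set ℝ}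
    (hpos : ∀ t ∈ s, 0 < q t) (hODE : ∀ t ∈ s, q'' t = -2 / q t ^ 2 - f)
    (hanti : AntitoneOn q s) : AntitoneOn q'' s := by
  intro x hx y hy hxy
  have := hpos y hy
  have := hanti hx hy hxy
  rw [hODE x hx, hODE y hy, neg_div, neg_div]
  gcongr

noncomputable def energy (q q' : ℝ → ℝ) (f t : ℝ) : ℝ := q' t ^ 2 - 4 / q t + 2 * f * q t

theorem hasDerivAt_energy {q q' q'' : ℝ → ℝ} {f t : ℝ} (hq' : HasDerivAt q (q' t) t)
    (hq'' : HasDerivAt q' (q'' t) t) (hqt : q t ≠ 0) (hODE : q'' t = -2 / q t ^ 2 - f) :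
    HasDerivAt (energy q q' f) 0 t :=
  (((hq''.pow 2).sub ((hasDerivAt_const t 4).div hq' hqt)).add
    (hq'.const_mul (2 * f))).congr_deriv (by rw [hODE]; field_simp; ring)

theorem energy_eq_of_ode {q q' q'' : ℝ → ℝ} {f a b : ℝ} (hne : ∀ t ∈ Ico a b, q t ≠ 0)
    (hq' : ∀ t ∈ Ico a b, HasDerivAt q (q' t) t) (hq'' : ∀ t ∈ Ico a b, HasDerivAt q' (q'' t) t)
    (hODE : ∀ t ∈ Ico a b, q'' t = -2 / q t ^ 2 - f) :
    ∀ t ∈ Ico a b, energy q q' f t = energy q q' f a := by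
  have hE : ∀ t ∈ Ico a b, HasDerivAt (energy q q' f) 0 t := fun t ht ↦
    hasDerivAt_energy (hq' t ht) (hq'' t ht) (hne t ht) (hODE t ht)
  intro t ht
  have hsub : Icc a t ⊆ Ico a b := Icc_subset_Ico_right ht.2
  exact constant_of_has_deriv_right_zero
    (fun x hx ↦ (hE x (hsub hx)).continuousAt.continuousWithinAt)
    (fun x hx ↦ (hE x (hsub (Ico_subset_Icc_self hx))).hasDerivWithinAt) t ⟨ht.1, le_rfl⟩

theorem ConcaveOn.add_div_two_le_integral {g : ℝ → ℝ} (hconc : ConcaveOn ℝ (Icc 0 1) g)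
    (hcont : ContinuousOn g (Icc 0 1)) : (g 0 + g 1) / 2 ≤ ∫ t in (0 : ℝ)..1, g t := by
  have hchord : ∀ t ∈ Icc (0 : ℝ) 1, (1 - t) * g 0 + t * g 1 ≤ g t := fun t ht ↦ by
    simpa using hconc.2 (left_mem_Icc.2 zero_le_one) (right_mem_Icc.2 zero_le_one)
      (sub_nonneg.2 ht.2) ht.1 (sub_add_cancel 1 t)
  calc (g 0 + g 1) / 2 = ∫ t in (0 : ℝ)..1, g 0 + t * (g 1 - g 0) := by
        rw [intervalIntegral.integral_add intervalIntegrable_const (by simp),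
          intervalIntegral.integral_mul_const, integral_id]
        simp only [intervalIntegral.integral_const, sub_zero, smul_eq_mul, one_mul, one_pow]
        ring
    _ ≤ ∫ t in (0 : ℝ)..1, g t :=
        intervalIntegral.integral_mono_on zero_le_one (by simp)
          (hcont.intervalIntegrable_of_Icc zero_le_one) fun t ht ↦ by linarith [hchord t ht]

theorem le_two_add_half_of_energy {q q' : ℝ → ℝ} {f : ℝ} (hf : 0 ≤ f)
    (hcont : ContinuousOn q (Icc 0 1)) (hq1 : q 1 = 0) (hq0 : 1 ≤ q 0) (hq'0 : q' 0 = 0)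
    (henergy : ∀ t ∈ Ico 0 1, energy q q' f t = energy q q' f 0)
    (hmul : ∀ t ∈ Ico 0 1, t * q' t ≤ 2 * (q t - q 0)) : q 0 ≤ 2 + f / 2 := by
  rcases hq0.eq_or_lt with hq0 | hq0
  · linarith
  obtain ⟨s, hs, hqs⟩ : 1 ∈ q '' Ioo 0 1 :=
    intermediate_value_Ioo' zero_le_one hcont ⟨hq1 ▸ zero_lt_one, hq0⟩
  have hEs := henergy s (Ioo_subset_Ico_self hs)
  have hms := hmul s (Ioo_subset_Ico_self hs)
  simp only [energy, hqs, hq'0] at hEs hms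
  have hsq : 4 * (q 0 - 1) ^ 2 ≤ q' s ^ 2 := by
    have : 2 * (q 0 - 1) ≤ -q' s := by nlinarith [hs.1, hs.2]
    nlinarith
  have hdiv : 4 / q 0 * q 0 = 4 := div_mul_cancel₀ 4 (by positivity)
  have hdiv_le : 4 / q 0 ≤ 4 := div_le_self (by norm_num) hq0.le
  have : 4 * (q 0 - 1) ^ 2 ≤ (q 0 - 1) * (4 / q 0 + 2 * f) := by nlinarith
  nlinarith

theorem stmt_7_general (q q' q'' : ℝ → ℝ) (f : ℝ) (hf : 0 ≤ f)
    (hcont : ContinuousOn q (Set.Icc 0 1))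
    (hpos : ∀ t ∈ Set.Ico (0:ℝ) 1, 0 < q t)
    (hq' : ∀ t ∈ Set.Ico (0:ℝ) 1, HasDerivAt q (q' t) t)
    (hq'' : ∀ t ∈ Set.Ico (0:ℝ) 1, HasDerivAt q' (q'' t) t)
    (hq'0 : q' 0 = 0) (hq1 : q 1 = 0)
    (hODE : ∀ t ∈ Set.Ico (0:ℝ) 1, q'' t = -2 / (q t) ^ 2 - f) :
    StrictConcaveOn ℝ (Set.Icc 0 1) q ∧
    StrictAntiOn q (Set.Ioo 0 1) ∧
    1 ≤ q 0 ∧ q 0 ≤ 2 + f / 2 ∧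
    q 0 / 2 ≤ ∫ t in (0:ℝ)..1, q t ∧ (∫ t in (0:ℝ)..1, q t) ≤ q 0 := by
  have h0 : (0:ℝ) ∈ Ico 0 1 := left_mem_Ico.2 one_pos
  have hq''neg : ∀ t ∈ Ioo (0:ℝ) 1, q'' t < 0 := fun t ht ↦ by
    rw [hODE t (Ioo_subset_Ico_self ht), neg_div]
    linarith [div_pos two_pos (pow_pos (hpos t (Ioo_subset_Ico_self ht)) 2)]
  have hq'anti : StrictAntiOn q' (Ico 0 1) := strictAntiOn_Ico_of_hasDerivAt_neg hq'' hq''neg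
  have hq'neg : ∀ t ∈ Ioo (0:ℝ) 1, q' t < 0 := fun t ht ↦
    hq'0 ▸ hq'anti h0 (Ioo_subset_Ico_self ht) ht.1
  have hanti : StrictAntiOn q (Icc 0 1) :=
    strictAntiOn_Icc_of_hasDerivAt_neg hcont (fun t ht ↦ hq' t (Ioo_subset_Ico_self ht)) hq'neg
  have hconc : StrictConcaveOn ℝ (Icc 0 1) q :=
    strictConcaveOn_Icc_of_hasDerivAt hcont (fun t ht ↦ hq' t (Ioo_subset_Ico_self ht))
      (hq'anti.mono Ioo_subset_Ico_self)
  have hq''anti : AntitoneOn q'' (Ico 0 1) :=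
    antitoneOn_of_eq_neg_two_div_sq_sub hpos hODE (hanti.antitoneOn.mono Ico_subset_Icc_self)
  have hlow : 1 ≤ q 0 := by
    refine one_le_of_deriv2_le_neg_two_div_sq hcont hq' hq'' hq'0 hq1 (hpos 0 h0) fun t ht ↦ ?_
    have := hq''anti h0 (Ioo_subset_Ico_self ht) ht.1.le
    rw [hODE 0 h0, neg_div] at this
    linarith
  have hup : q 0 ≤ 2 + f / 2 := le_two_add_half_of_energy hf hcont hq1 hlow hq'0
    (energy_eq_of_ode (fun t ht ↦ (hpos t ht).ne') hq' hq'' hODE)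
    (by simpa using mul_deriv_le_two_mul_sub hq' hq'' hq'0 hq''anti)
  refine ⟨hconc, hanti.mono Ioo_subset_Icc_self, hlow, hup, ?_, ?_⟩
  · simpa [hq1] using hconc.concaveOn.add_div_two_le_integral hcont
  · calc ∫ t in (0:ℝ)..1, q t ≤ ∫ _ in (0:ℝ)..1, q 0 :=
          intervalIntegral.integral_mono_on zero_le_one
            (hcont.intervalIntegrable_of_Icc zero_le_one) intervalIntegrable_const
            fun t ht ↦ hanti.antitoneOn (left_mem_Icc.2 zero_le_one) ht ht.1
      _ = q 0 := by simp

/-- Let `q : [0,1] → [0,∞)` be continuous, smooth and positive on `[0,1)`,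
with `q̇(0) = 0`, `q(1) = 0`, solving `q̈ = -2/q² - f` on `[0,1)` with a
constant `f ≥ 0`. Then `q` is strictly concave on `[0,1]`, strictly
decreasing on `(0,1)`, its maximum `q(0)` satisfies `1 ≤ q(0) ≤ 2 + f/2`,
and its mean satisfies `q(0)/2 ≤ ∫₀¹ q ≤ q(0)`. -/
theorem stmt_7 (q q' q'' : ℝ → ℝ) (f : ℝ) (hf : 0 ≤ f)
    (hcont : ContinuousOn q (Set.Icc 0 1))
    (hnonneg : ∀ t ∈ Set.Icc (0:ℝ) 1, 0 ≤ q t)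
    (hpos : ∀ t ∈ Set.Ico (0:ℝ) 1, 0 < q t)
    (hq' : ∀ t ∈ Set.Ico (0:ℝ) 1, HasDerivAt q (q' t) t)
    (hq'' : ∀ t ∈ Set.Ico (0:ℝ) 1, HasDerivAt q' (q'' t) t)
    (hq'0 : q' 0 = 0) (hq1 : q 1 = 0)
    (hODE : ∀ t ∈ Set.Ico (0:ℝ) 1, q'' t = -2 / (q t) ^ 2 - f) :
    StrictConcaveOn ℝ (Set.Icc 0 1) q ∧
    StrictAntiOn q (Set.Ioo 0 1) ∧
    1 ≤ q 0 ∧ q 0 ≤ 2 + f / 2 ∧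
    q 0 / 2 ≤ ∫ t in (0:ℝ)..1, q t ∧ (∫ t in (0:ℝ)..1, q t) ≤ q 0 :=
  stmt_7_general q q' q'' f hf hcont hpos hq' hq'' hq'0 hq1 hODE
end

section
/- Let $z\in C^1(S^1,\mathbb{R})$ with finite zero set, $\tau_z$ the inverse of $t_z(\tau)=\|z\|^{-2}\int_0^\tau z^2$, and $q(t)=z(\tau_z(t))^2$. Then $q$ is differentiable outside the zeroes of $q$ with $\dot q(t) = 2\|z\|^2 z'(\tau_z(t))/z(\tau_z(t))$, and the $L^2$-norms satisfy $\|\dot q\|^2 = 4\|z\|^2\|z'\|^2$ (assuming $\dot q\in L^2$). -/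
/-!
The time change `t_z = timeChange z ‖z‖²` has `t_z' = z²/‖z‖²`, so where `z(τ_z(t)) ≠ 0` its
inverse `τ_z` has derivative `‖z‖²/z(τ_z(t))²` and the chain rule gives `q̇`. For the norm,
substitute `t = t_z(τ)`: the Jacobian `z²/‖z‖²` cancels the `1/z²` in `q̇²`, leaving `4‖z‖² z'²`
off the zero set of `z`, which is finite and hence null. As `t_z` is monotone, this substitution
is valid for an arbitrary integrand.
-/

open MeasureTheory Set
open scoped Interval

noncomputable def timeChange (z : ℝ → ℝ) (c τ : ℝ) : ℝ := (∫ σ in (0:ℝ)..τ, z σ ^ 2) / c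

section TimeChange

variable {z ψ : ℝ → ℝ} {c : ℝ}

theorem hasDerivAt_timeChange (hz : Continuous z) (c τ : ℝ) :
    HasDerivAt (timeChange z c) (z τ ^ 2 / c) τ :=
  ((hz.pow 2).integral_hasStrictDerivAt 0 τ).hasDerivAt.div_const c

theorem hasDerivAt_sq_comp_timeChange_inv (hz : Continuous z) (hc : c ≠ 0) {t : ℝ}
    (hzt' : DifferentiableAt ℝ z (ψ t)) (hψ : ContinuousAt ψ t)
    (hinv : ∀ s, timeChange z c (ψ s) = s) (hzt : z (ψ t) ≠ 0) :
    HasDerivAt (fun s => z (ψ s) ^ 2) (2 * c * deriv z (ψ t) / z (ψ t)) t := by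
  have hψ' : HasDerivAt ψ (z (ψ t) ^ 2 / c)⁻¹ t :=
    (hasDerivAt_timeChange hz c (ψ t)).of_local_left_inverse hψ
      (div_ne_zero (pow_ne_zero 2 hzt) hc) (Filter.Eventually.of_forall hinv)
  have hzψ := (hzt'.hasDerivAt.comp t hψ').fun_pow 2
  refine hzψ.congr_deriv ?_
  simp only [Function.comp_apply]
  field_simp
  ring

theorem integral_sq_comp_timeChange_inv (hz : Continuous z) (hc : 0 < c) {a b : ℝ}
    (hψ : ∀ τ, ψ (timeChange z c τ) = τ) (hzeros : ∀ᵐ τ, τ ∈ Ι a b → z τ ≠ 0) :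
    ∫ t in timeChange z c a..timeChange z c b, (2 * c * deriv z (ψ t) / z (ψ t)) ^ 2
      = 4 * c * ∫ τ in a..b, deriv z τ ^ 2 := by
  have hderiv := hasDerivAt_timeChange hz c
  rw [← intervalIntegral.integral_comp_mul_deriv_of_deriv_nonneg
      (fun τ _ => (hderiv τ).continuousAt.continuousWithinAt) (fun τ _ => hderiv τ)
      (fun τ _ => by positivity),
    ← intervalIntegral.integral_const_mul]
  refine intervalIntegral.integral_congr_ae ?_
  filter_upwards [hzeros] with τ hτ hmem
  have hzτ := hτ hmem
  simp only [Function.comp_apply, hψ]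
  field_simp
  ring

end TimeChange

theorem ae_ne_zero_of_finite_zeros_Ico {z : ℝ → ℝ} {a b : ℝ} (hab : a ≤ b)
    (hfin : {τ ∈ Ico a b | z τ = 0}.Finite) : ∀ᵐ τ, τ ∈ Ι a b → z τ ≠ 0 := by
  have hnull : volume (insert b {τ ∈ Ico a b | z τ = 0}) = 0 := (hfin.insert b).measure_zero _
  filter_upwards [measure_eq_zero_iff_ae_notMem.mp hnull] with τ hτ hmem hzτ
  rw [uIoc_of_le hab] at hmem
  rcases hmem.2.eq_or_lt with rfl | hlt
  · exact hτ (mem_insert _ _)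
  · exact hτ (mem_insert_of_mem _ ⟨⟨hmem.1.le, hlt⟩, hzτ⟩)

theorem stmt_15_general (z τz : ℝ → ℝ)
    (hz : ContDiff ℝ 1 z)
    (hfin : {τ ∈ Set.Ico (0:ℝ) 1 | z τ = 0}.Finite)
    (hnorm : 0 < ∫ σ in (0:ℝ)..1, z σ ^ 2)
    (hτz : Continuous τz)
    (hinv : ∀ t, (∫ σ in (0:ℝ)..(τz t), z σ ^ 2) / (∫ σ in (0:ℝ)..1, z σ ^ 2)
      = t)
    (hinv' : ∀ τ,
      τz ((∫ σ in (0:ℝ)..τ, z σ ^ 2) / (∫ σ in (0:ℝ)..1, z σ ^ 2)) = τ) :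
    (∀ t, z (τz t) ≠ 0 →
      HasDerivAt (fun s => z (τz s) ^ 2)
        (2 * (∫ σ in (0:ℝ)..1, z σ ^ 2) * deriv z (τz t) / z (τz t)) t) ∧
    (IntegrableOn
        (fun t => (2 * (∫ σ in (0:ℝ)..1, z σ ^ 2) * deriv z (τz t)
          / z (τz t)) ^ 2) (Set.Ioc (0:ℝ) 1) →
      (∫ t in (0:ℝ)..1, (2 * (∫ σ in (0:ℝ)..1, z σ ^ 2) * deriv z (τz t)
          / z (τz t)) ^ 2)
        = 4 * (∫ σ in (0:ℝ)..1, z σ ^ 2) * ∫ σ in (0:ℝ)..1, deriv z σ ^ 2) := by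
  refine ⟨fun t hzt => hasDerivAt_sq_comp_timeChange_inv hz.continuous hnorm.ne'
    (hz.differentiable one_ne_zero _) hτz.continuousAt hinv hzt, fun _ => ?_⟩
  have h0 : timeChange z (∫ σ in (0:ℝ)..1, z σ ^ 2) 0 = 0 := by simp [timeChange]
  have h1 : timeChange z (∫ σ in (0:ℝ)..1, z σ ^ 2) 1 = 1 := div_self hnorm.ne'
  simpa only [h0, h1] using integral_sq_comp_timeChange_inv hz.continuous hnorm hinv'
    (ae_ne_zero_of_finite_zeros_Ico zero_le_one hfin)

/-- Let `z ∈ C¹(S¹,ℝ)` with finitely many zeroes, `τ_z` the inverse of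
`t_z(τ) = ‖z‖⁻² ∫₀^τ z²`, and `q(t) = z(τ_z(t))²`. Then outside the zeroes
of `q` one has `q̇(t) = 2‖z‖² z'(τ_z(t))/z(τ_z(t))`, and (assuming
`q̇ ∈ L²`) the `L²`-norms satisfy `‖q̇‖² = 4‖z‖²‖z'‖²`. -/
theorem stmt_15 (z τz : ℝ → ℝ)
    (hz : ContDiff ℝ 1 z) (hzper : Function.Periodic z 1)
    (hfin : {τ ∈ Set.Ico (0:ℝ) 1 | z τ = 0}.Finite)
    (hnorm : 0 < ∫ σ in (0:ℝ)..1, z σ ^ 2)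
    (hτz : Continuous τz) (hτz0 : τz 0 = 0) (hτz1 : τz 1 = 1)
    (hinv : ∀ t, (∫ σ in (0:ℝ)..(τz t), z σ ^ 2) / (∫ σ in (0:ℝ)..1, z σ ^ 2)
      = t)
    (hinv' : ∀ τ,
      τz ((∫ σ in (0:ℝ)..τ, z σ ^ 2) / (∫ σ in (0:ℝ)..1, z σ ^ 2)) = τ) :
    (∀ t, z (τz t) ≠ 0 →
      HasDerivAt (fun s => z (τz s) ^ 2)
        (2 * (∫ σ in (0:ℝ)..1, z σ ^ 2) * deriv z (τz t) / z (τz t)) t) ∧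
    (IntegrableOn
        (fun t => (2 * (∫ σ in (0:ℝ)..1, z σ ^ 2) * deriv z (τz t)
          / z (τz t)) ^ 2) (Set.Ioc (0:ℝ) 1) →
      (∫ t in (0:ℝ)..1, (2 * (∫ σ in (0:ℝ)..1, z σ ^ 2) * deriv z (τz t)
          / z (τz t)) ^ 2)
        = 4 * (∫ σ in (0:ℝ)..1, z σ ^ 2) * ∫ σ in (0:ℝ)..1, deriv z σ ^ 2) :=
  stmt_15_general z τz hz hfin hnorm hτz hinv hinv'
end

section
/- Suppose $q:S^1\setminus\{t_*\}\to(0,\infty)$ is $C^1$ with $q(t)\to 0$ as $t\to t_*$, and the Kepler energy $E(t) = \dot q(t)^2/2 - N/q(t)$ (with $N>0$) extends to a continuous function on $S^1$. Then $\lim_{t\to t_*} s_*(t)\sqrt{q(t)}\,\dot q(t) = \sqrt{2N}$, where $s_*(t)=-1$ for $t<t_*$ and $s_*(t)=+1$ for $t>t_*$ (locally near $t_*$). -/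
/-!
Since `q · q̇² = 2 q E + 2N` and `q → 0` while `E` stays bounded, `q · q̇² → 2N`, so
`|√q · q̇| → √(2N)`. In particular `q̇ ≠ 0` on a punctured neighbourhood of `t⋆`; by Darboux's
theorem `q̇` then has constant sign on each side of `t⋆`, and as the positive function `q`
tends to `0` at `t⋆`, this sign must be `-1` before `t⋆` and `+1` after it.
-/

open Filter Topology Set

lemma tendsto_mul_sq_of_tendsto_energy {q q' : ℝ → ℝ} {l : Filter ℝ} {N E₀ : ℝ}
    (hne : ∀ᶠ t in l, q t ≠ 0) (hq0 : Tendsto q l (𝓝 0))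
    (hE : Tendsto (fun t => q' t ^ 2 / 2 - N / q t) l (𝓝 E₀)) :
    Tendsto (fun t => q t * q' t ^ 2) l (𝓝 (2 * N)) := by
  have hlim := ((hq0.const_mul 2).mul hE).add_const (2 * N)
  rw [mul_zero, zero_mul, zero_add] at hlim
  refine hlim.congr' ?_
  filter_upwards [hne] with t ht
  field_simp
  ring

lemma forall_deriv_pos_of_ne_zero_of_lt {f f' : ℝ → ℝ} {s : Set ℝ} (hs : Convex ℝ s)
    (hd : ∀ x ∈ s, HasDerivAt f (f' x) x) (hne : ∀ x ∈ s, f' x ≠ 0) {u v : ℝ}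
    (hu : u ∈ s) (hv : v ∈ s) (huv : u < v) (hf : f u < f v) : ∀ x ∈ s, 0 < f' x := by
  have huv_sub : Icc u v ⊆ s := hs.ordConnected.out hu hv
  obtain ⟨c, hc, hfc⟩ := exists_hasDerivAt_eq_slope f f' huv
    (fun x hx => (hd x (huv_sub hx)).continuousAt.continuousWithinAt)
    (fun x hx => hd x (huv_sub (Ioo_subset_Icc_self hx)))
  have hc_pos : 0 < f' c := hfc ▸ div_pos (sub_pos.2 hf) (sub_pos.2 huv)
  refine (hasDerivWithinAt_forall_lt_or_forall_gt_of_forall_ne hs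
    (fun x hx => (hd x hx).hasDerivWithinAt) hne).resolve_left fun hneg => ?_
  exact (hneg c (huv_sub (Ioo_subset_Icc_self hc))).not_gt hc_pos

lemma eventually_deriv_pos_of_tendsto_nhdsGT_zero {f f' : ℝ → ℝ} {a : ℝ}
    (hd : ∀ᶠ x in 𝓝[>] a, HasDerivAt f (f' x) x) (hne : ∀ᶠ x in 𝓝[>] a, f' x ≠ 0)
    (hpos : ∀ᶠ x in 𝓝[>] a, 0 < f x) (hlim : Tendsto f (𝓝[>] a) (𝓝 0)) :
    ∀ᶠ x in 𝓝[>] a, 0 < f' x := by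
  obtain ⟨b, hab, hb⟩ := (nhdsGT_basis a).eventually_iff.1 (hd.and (hne.and hpos))
  obtain ⟨v, hv⟩ := nonempty_Ioo.2 hab
  obtain ⟨u, hfu, hu⟩ :=
    ((hlim.eventually (eventually_lt_nhds (hb hv).2.2)).and (Ioo_mem_nhdsGT hv.1)).exists
  filter_upwards [Ioo_mem_nhdsGT hab] using
    forall_deriv_pos_of_ne_zero_of_lt (convex_Ioo a b) (fun x hx => (hb hx).1)
      (fun x hx => (hb hx).2.1) ⟨hu.1, hu.2.trans hv.2⟩ hv hu.2 hfu

lemma eventually_deriv_neg_of_tendsto_nhdsLT_zero {f f' : ℝ → ℝ} {b : ℝ}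
    (hd : ∀ᶠ x in 𝓝[<] b, HasDerivAt f (f' x) x) (hne : ∀ᶠ x in 𝓝[<] b, f' x ≠ 0)
    (hpos : ∀ᶠ x in 𝓝[<] b, 0 < f x) (hlim : Tendsto f (𝓝[<] b) (𝓝 0)) :
    ∀ᶠ x in 𝓝[<] b, f' x < 0 := by
  obtain ⟨a, hab, ha⟩ := (nhdsLT_basis b).eventually_iff.1 (hd.and (hne.and hpos))
  obtain ⟨u, hu⟩ := nonempty_Ioo.2 hab
  obtain ⟨v, hfv, hv⟩ :=
    ((hlim.eventually (eventually_lt_nhds (ha hu).2.2)).and (Ioo_mem_nhdsLT hu.2)).exists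
  filter_upwards [Ioo_mem_nhdsLT hab] with x hx
  exact neg_pos.1 <| forall_deriv_pos_of_ne_zero_of_lt (f := fun x => -f x) (convex_Ioo a b)
    (fun x hx => (ha hx).1.neg) (fun x hx => neg_ne_zero.2 (ha hx).2.1) hu
    ⟨hu.1.trans hv.1, hv.2⟩ hv.1 (neg_lt_neg hfv) x hx

theorem stmt_16_general (N tstar : ℝ) (hN : 0 < N) (q q' : ℝ → ℝ)
    (hpos : ∀ t ≠ tstar, 0 < q t)
    (hderiv : ∀ t ≠ tstar, HasDerivAt q (q' t) t)
    (hq0 : Tendsto q (𝓝[≠] tstar) (𝓝 0))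
    (hE : ∃ E₀ : ℝ,
      Tendsto (fun t => q' t ^ 2 / 2 - N / q t) (𝓝[≠] tstar) (𝓝 E₀)) :
    Tendsto
      (fun t => (if t < tstar then (-1:ℝ) else 1) * Real.sqrt (q t) * q' t)
      (𝓝[≠] tstar) (𝓝 (Real.sqrt (2 * N))) := by
  obtain ⟨E₀, hE⟩ := hE
  have hd : ∀ᶠ t in 𝓝[≠] tstar, HasDerivAt q (q' t) t := eventually_mem_nhdsWithin.mono hderiv
  have hq : ∀ᶠ t in 𝓝[≠] tstar, 0 < q t := eventually_mem_nhdsWithin.mono hpos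
  have hqq' := tendsto_mul_sq_of_tendsto_energy (hq.mono fun _ => ne_of_gt) hq0 hE
  have hne : ∀ᶠ t in 𝓝[≠] tstar, q' t ≠ 0 :=
    (hqq'.eventually_ne (by positivity)).mono fun t ht h => ht (by simp [h])
  have hright := eventually_deriv_pos_of_tendsto_nhdsGT_zero
    (hd.filter_mono (nhdsGT_le_nhdsNE _)) (hne.filter_mono (nhdsGT_le_nhdsNE _))
    (hq.filter_mono (nhdsGT_le_nhdsNE _)) (hq0.mono_left (nhdsGT_le_nhdsNE _))
  have hleft := eventually_deriv_neg_of_tendsto_nhdsLT_zero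
    (hd.filter_mono (nhdsLT_le_nhdsNE _)) (hne.filter_mono (nhdsLT_le_nhdsNE _))
    (hq.filter_mono (nhdsLT_le_nhdsNE _)) (hq0.mono_left (nhdsLT_le_nhdsNE _))
  have hsign : ∀ᶠ t in 𝓝[≠] tstar, Real.sqrt (q t * q' t ^ 2) =
      (if t < tstar then (-1:ℝ) else 1) * Real.sqrt (q t) * q' t := by
    rw [← nhdsLT_sup_nhdsGT, eventually_sup]
    constructor
    · filter_upwards [hleft, self_mem_nhdsWithin] with t ht (htlt : t < tstar)
      rw [if_pos htlt, Real.sqrt_mul', Real.sqrt_sq_eq_abs, abs_of_neg ht] <;> [ring; positivity]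
    · filter_upwards [hright, self_mem_nhdsWithin] with t ht (htgt : tstar < t)
      rw [if_neg (not_lt.2 (le_of_lt htgt)), Real.sqrt_mul', Real.sqrt_sq_eq_abs,
        abs_of_pos ht] <;> [ring; positivity]
  exact ((Real.continuous_sqrt.tendsto _).comp hqq').congr' hsign

/-- Suppose `q` is positive and `C¹` away from `t⋆` with `q(t) → 0` as
`t → t⋆`, and the Kepler energy `E = q̇²/2 - N/q` (with `N > 0`) extends
continuously over `t⋆`. Then `s⋆(t)·√(q(t))·q̇(t) → √(2N)` as `t → t⋆`,
where `s⋆ = -1` before `t⋆` and `+1` after. -/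
theorem stmt_16 (N tstar : ℝ) (hN : 0 < N) (q q' : ℝ → ℝ)
    (hpos : ∀ t ≠ tstar, 0 < q t)
    (hderiv : ∀ t ≠ tstar, HasDerivAt q (q' t) t)
    (hq'cont : ContinuousOn q' {t | t ≠ tstar})
    (hq0 : Tendsto q (𝓝[≠] tstar) (𝓝 0))
    (hE : ∃ E₀ : ℝ,
      Tendsto (fun t => q' t ^ 2 / 2 - N / q t) (𝓝[≠] tstar) (𝓝 E₀)) :
    Tendsto
      (fun t => (if t < tstar then (-1:ℝ) else 1) * Real.sqrt (q t) * q' t)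
      (𝓝[≠] tstar) (𝓝 (Real.sqrt (2 * N))) :=
  stmt_16_general N tstar hN q q' hpos hderiv hq0 hE
end
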